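/- Let C_1,...,C_m be closed convex subsets of a real Hilbert space H with C := ∩C_i ≠ ∅, and let y_k := (P_{C_m} ⋯ P_{C_1})^k(y_0). Then ∑_{k=1}^∞ ‖y_k − y_{k−1}‖² ≤ m·‖y_0 − z‖² for every z ∈ C. -/

import Mathlib

noncomputable section
open Filter Metric

variable {H : Type} [NormedAddCommGroup H] [InnerProductSpace ℝ H] [CompleteSpace H]

/-- `cyclicComp P j` is the composition of the first `j` of the maps `P 0, …, P (m-1)`
(with `P 0` applied first).  In particular `cyclicComp P m = P_{C_m} ∘ ⋯ ∘ P_{C_1}` is one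
full sweep of the method of cyclic projections, and `cyclicComp P i` is the partial
product `Q_i = P_{C_i} ⋯ P_{C_1}` (with `cyclicComp P 0 = Q_0 = I`). -/
def cyclicComp {m : ℕ} (P : Fin m → H → H) (j : ℕ) : H → H :=
  fun x => ((List.ofFn P).take j).foldl (fun a p => p a) x

/-- `P i` is the metric (nearest-point) projection onto the set `C i`, for each `i`. -/
def IsMetricProj {m : ℕ} (C : Fin m → Set H) (P : Fin m → H → H) : Prop :=
  ∀ i x, P i x ∈ C i ∧ ∀ y ∈ C i, ‖x - P i x‖ ≤ ‖x - y‖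

open RealInnerProductSpace in
set_option linter.unusedSectionVars false in
lemma proj_ineq {K : Set H} (hK : Convex ℝ K) {x p zz : H} (hp : p ∈ K) (hzz : zz ∈ K)
    (hmin : ∀ y ∈ K, ‖x - p‖ ≤ ‖x - y‖) :
    ‖p - zz‖ ^ 2 + ‖p - x‖ ^ 2 ≤ ‖x - zz‖ ^ 2 := by
  haveI : Nonempty K := ⟨⟨zz, hzz⟩⟩
  have heq : ‖x - p‖ = ⨅ w : K, ‖x - w‖ :=
    le_antisymm (le_ciInf fun w => hmin w w.2)
      (ciInf_le (f := fun w : K => ‖x - (w : H)‖) ⟨0, by rintro r ⟨w, rfl⟩; exact norm_nonneg _⟩ ⟨p, hp⟩)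
  have hperp : ⟪x - p, zz - p⟫ ≤ 0 :=
    ((norm_eq_iInf_iff_real_inner_le_zero hK hp).mp heq) zz hzz
  have hexp : ‖x - zz‖ ^ 2 = ‖x - p‖ ^ 2 + 2 * ⟪x - p, p - zz⟫ + ‖p - zz‖ ^ 2 := by
    have := norm_add_sq_real (x - p) (p - zz)
    simpa [sub_add_sub_cancel] using this
  have h2 : ⟪x - p, p - zz⟫ = - ⟪x - p, zz - p⟫ := by
    rw [← inner_neg_right]; congr 1; abel
  have h3 : ‖p - x‖ = ‖x - p‖ := norm_sub_rev _ _
  have h3' : ‖p - x‖ ^ 2 = ‖x - p‖ ^ 2 := by rw [h3]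
  linarith [hperp, hexp, h2, h3']

lemma cyclicComp_succ {m : ℕ} (P : Fin m → H → H) {j : ℕ} (hj : j < m) (x : H) :
    cyclicComp P (j + 1) x = P ⟨j, hj⟩ (cyclicComp P j x) := by
  unfold cyclicComp
  rw [List.take_succ, List.foldl_append]
  simp [List.ofFnNthVal, hj]

/-- For closed convex sets `C₁,…,Cₘ` with nonempty intersection and any
`z ∈ ⋂ᵢ Cᵢ`, the cyclic projection iterates satisfy
`∑_{k=1}^∞ ‖y_k − y_{k−1}‖² ≤ m·‖y₀ − z‖²` (stated via all partial sums). -/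
theorem sum_sq_increments_le {m : ℕ} (C : Fin m → Set H)
    (hconv : ∀ i, Convex ℝ (C i)) (hclosed : ∀ i, IsClosed (C i))
    (P : Fin m → H → H) (hP : IsMetricProj C P)
    (y₀ : H) (z : H) (hz : z ∈ ⋂ i, C i) (n : ℕ) :
    ∑ k ∈ Finset.range n, ‖(cyclicComp P m)^[k + 1] y₀ - (cyclicComp P m)^[k] y₀‖ ^ 2 ≤
      (m : ℝ) * ‖y₀ - z‖ ^ 2 := by
  -- Key one-sweep inequality
  have key : ∀ x : H, (m : ℝ) * ‖cyclicComp P m x - z‖ ^ 2 + ‖cyclicComp P m x - x‖ ^ 2 ≤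
      (m : ℝ) * ‖x - z‖ ^ 2 := by
    intro x
    -- Fejér-type bound with accumulated increments
    have B : ∀ j, j ≤ m → ‖cyclicComp P j x - z‖ ^ 2 +
        (∑ i ∈ Finset.range j, ‖cyclicComp P (i + 1) x - cyclicComp P i x‖ ^ 2) ≤
        ‖x - z‖ ^ 2 := by
      intro j hj
      induction j with
      | zero => simp [cyclicComp]
      | succ j ih =>
        have hjm : j < m := hj
        have zC : z ∈ C ⟨j, hjm⟩ := Set.mem_iInter.mp hz _
        have hstep := cyclicComp_succ P hjm x
        obtain ⟨hmem, hmin⟩ := hP ⟨j, hjm⟩ (cyclicComp P j x)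
        have := proj_ineq (hconv ⟨j, hjm⟩) hmem zC hmin
        rw [Finset.sum_range_succ, hstep]
        have ih' := ih (Nat.le_of_succ_le hj)
        nlinarith [this]
    have Bm := B m le_rfl
    -- Cauchy–Schwarz bound for the full increment
    have Cm : ‖cyclicComp P m x - x‖ ^ 2 ≤
        (m : ℝ) * ∑ i ∈ Finset.range m, ‖cyclicComp P (i + 1) x - cyclicComp P i x‖ ^ 2 := by
      have htel : cyclicComp P m x - x =
          ∑ i ∈ Finset.range m, (cyclicComp P (i + 1) x - cyclicComp P i x) := by
        rw [Finset.sum_range_sub (fun i => cyclicComp P i x)]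
        rfl
      calc ‖cyclicComp P m x - x‖ ^ 2
          ≤ (∑ i ∈ Finset.range m, ‖cyclicComp P (i + 1) x - cyclicComp P i x‖) ^ 2 := by
            rw [htel]
            exact pow_le_pow_left₀ (norm_nonneg _) (norm_sum_le _ _) 2
        _ ≤ (m : ℝ) * ∑ i ∈ Finset.range m, ‖cyclicComp P (i + 1) x - cyclicComp P i x‖ ^ 2 := by
            simpa using sq_sum_le_card_mul_sum_sq
              (s := Finset.range m)
              (f := fun i => ‖cyclicComp P (i + 1) x - cyclicComp P i x‖)
    nlinarith [Bm, Cm]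
  -- Telescoping
  have main : ∀ n : ℕ,
      (∑ k ∈ Finset.range n, ‖(cyclicComp P m)^[k + 1] y₀ - (cyclicComp P m)^[k] y₀‖ ^ 2) +
        (m : ℝ) * ‖(cyclicComp P m)^[n] y₀ - z‖ ^ 2 ≤ (m : ℝ) * ‖y₀ - z‖ ^ 2 := by
    intro n
    induction n with
    | zero => simp
    | succ n ih =>
      rw [Finset.sum_range_succ]
      have hk := key ((cyclicComp P m)^[n] y₀)
      rw [Function.iterate_succ_apply']
      nlinarith [hk]
  have := main n
  nlinarith [mul_nonneg (Nat.cast_nonneg m : (0:ℝ) ≤ m) (sq_nonneg ‖(cyclicComp P m)^[n] y₀ - z‖)]
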